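/- Let O be a Noetherian integrally closed domain and let q be a prime ideal of the polynomial ring O[t] such that q ∩ O = (0) and the quotient O[t]/q is finitely generated as an O-module. Then q is a principal ideal generated by a monic polynomial: there exists a unique monic polynomial h ∈ O[t] with q = (h). -/

import Mathlib

/-!
The image `θ` of `t` in the domain `O[t]/q` is integral over `O`, since `O[t]/q` is a finite
`O`-module, and `q` is the kernel of `p ↦ p(θ)`. As `q ∩ O = 0`, the ring `O[t]/q` is torsion-free
over `O`, so Gauss's lemma for the integrally closed domain `O` shows that this kernel is generated
by the minimal polynomial of `θ` over `O`. Two monic generators of a principal ideal of `O[t]` are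
associated, hence equal.
-/

open Polynomial

namespace Polynomial

variable {R : Type*} [CommRing R]

theorem aeval_mk_X (I : Ideal R[X]) : aeval (Ideal.Quotient.mk I X) = Ideal.Quotient.mkₐ R I := by
  rw [← Ideal.Quotient.mkₐ_eq_mk R, aeval_algHom, aeval_X_left, AlgHom.comp_id]

theorem ker_aeval_mk_X (I : Ideal R[X]) : RingHom.ker (aeval (Ideal.Quotient.mk I X)) = I := by
  rw [aeval_mk_X]
  exact Ideal.Quotient.mkₐ_ker R I

theorem injective_algebraMap_quotient_iff (I : Ideal R[X]) :
    Function.Injective (algebraMap R (R[X] ⧸ I)) ↔ I.comap C = ⊥ := by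
  rw [RingHom.injective_iff_ker_eq_bot, IsScalarTower.algebraMap_eq R R[X], algebraMap_eq,
    Ideal.Quotient.algebraMap_eq, ← RingHom.comap_ker, Ideal.mk_ker]

theorem Monic.eq_of_span_singleton_eq [IsDomain R] {p q : R[X]} (hp : p.Monic) (hq : q.Monic)
    (h : Ideal.span {p} = Ideal.span {q}) : p = q :=
  eq_of_monic_of_associated hp hq (Ideal.span_singleton_eq_span_singleton.mp h)

end Polynomial

theorem prime_ideal_eq_span_monic_of_finite_quotient_general
    (O : Type*) [CommRing O] [IsDomain O] [IsIntegrallyClosed O]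
    (q : Ideal (Polynomial O)) (hq : q.IsPrime)
    (hq0 : q.comap (Polynomial.C : O →+* Polynomial O) = ⊥)
    (hfin : Module.Finite O (Polynomial O ⧸ q)) :
    ∃! h : Polynomial O, h.Monic ∧ q = Ideal.span {h} := by
  set θ := Ideal.Quotient.mk q X
  have : Module.IsTorsionFree O (O[X] ⧸ q) := Module.isTorsionFree_iff_algebraMap_injective.mpr
    ((injective_algebraMap_quotient_iff q).mpr hq0)
  have hθ : IsIntegral O θ := (Algebra.IsIntegral.of_finite O (O[X] ⧸ q)).isIntegral θ
  have hq_span : q = Ideal.span {minpoly O θ} := by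
    rw [← minpoly.ker_eval hθ, AlgHom.toRingHom_eq_coe, RingHom.ker_coe_toRingHom, ker_aeval_mk_X]
  exact ⟨minpoly O θ, ⟨minpoly.monic hθ, hq_span⟩, fun h ⟨hh, hq_h⟩ =>
    hh.eq_of_span_singleton_eq (minpoly.monic hθ) (hq_h.symm.trans hq_span)⟩

theorem prime_ideal_eq_span_monic_of_finite_quotient
    (O : Type*) [CommRing O] [IsDomain O] [IsNoetherianRing O] [IsIntegrallyClosed O]
    (q : Ideal (Polynomial O)) (hq : q.IsPrime)
    (hq0 : q.comap (Polynomial.C : O →+* Polynomial O) = ⊥)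
    (hfin : Module.Finite O (Polynomial O ⧸ q)) :
    ∃! h : Polynomial O, h.Monic ∧ q = Ideal.span {h} :=
  prime_ideal_eq_span_monic_of_finite_quotient_general O q hq hq0 hfin
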